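/- arXiv:1206.4134 — 5 statements merged into one kernel-verified Lean document; each statement's English description precedes it below -/
import Mathlib

section
/- Let y be a differentiable function on [0,T) satisfying y'(t) ≤ -C y(t)² + K for constants C, K > 0. If y(0) = y₀ < -√(K/C), then y(t) → -∞ in finite time; more precisely, y(t) tends to -∞ before t reaches 1/(-C y₀ + K/y₀). -/
/-! While `y ≤ y₀` the right-hand side `-C y² + K` is negative, so `y` can never climb back
to the level `y₀` and stays below it. There `-C y² + K ≤ -a y²` with `a = C - K / y₀² > 0`, hence
`(1 / y)' ≥ a` and `1 / y(t) ≥ 1 / y₀ + a t`. As `1 / y(t) < 0`, this forces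
`t < -1 / (a y₀) = 1 / (-C y₀ + K / y₀)`. -/

open Set

theorem lt_mul_sq_of_lt_neg_sqrt {C K y : ℝ} (hC : 0 < C) (hy : y < -Real.sqrt (K / C)) :
    K < C * y ^ 2 := by
  have hy' : Real.sqrt (K / C) < -y := lt_neg_of_lt_neg hy
  have : K / C < y ^ 2 := by
    simpa using (Real.sqrt_lt' ((Real.sqrt_nonneg _).trans_lt hy')).1 hy'
  rwa [div_lt_iff₀ hC, mul_comm] at this

theorem neg_mul_sq_add_le_of_le_of_neg {C K y y₀ : ℝ} (hK : 0 ≤ K) (hy : y ≤ y₀) (hy₀ : y₀ < 0) :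
    -C * y ^ 2 + K ≤ -(C - K / y₀ ^ 2) * y ^ 2 := by
  have hsq : y₀ ^ 2 ≤ y ^ 2 := by nlinarith
  have : K ≤ K / y₀ ^ 2 * y ^ 2 := by
    rw [div_mul_eq_mul_div, le_div_iff₀ (pow_two_pos_of_ne_zero hy₀.ne)]
    exact mul_le_mul_of_nonneg_left hsq hK
  linarith

theorem le_of_deriv_neg_on_level {f : ℝ → ℝ} {a b c : ℝ}
    (hf : ∀ x ∈ Ico a b, DifferentiableAt ℝ f x) (ha : f a ≤ c)
    (hc : ∀ x ∈ Ico a b, f x = c → deriv f x < 0) : ∀ x ∈ Ico a b, f x ≤ c := by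
  intro x hx
  have hsub : Icc a x ⊆ Ico a b := Icc_subset_Ico_right hx.2
  exact image_le_of_deriv_right_lt_deriv_boundary' (B := fun _ ↦ c) (B' := 0)
    (fun z hz ↦ (hf z (hsub hz)).continuousAt.continuousWithinAt)
    (fun z hz ↦ (hf z (hsub (Ico_subset_Icc_self hz))).hasDerivAt.hasDerivWithinAt)
    ha continuousOn_const (fun _ _ ↦ hasDerivWithinAt_const _ _ _)
    (fun z hz ↦ hc z (hsub (Ico_subset_Icc_self hz))) ⟨hx.1, le_rfl⟩

theorem inv_add_mul_le_inv_of_deriv_le_neg_mul_sq {f : ℝ → ℝ} {a b m : ℝ}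
    (hf : ∀ x ∈ Ico a b, DifferentiableAt ℝ f x) (hf0 : ∀ x ∈ Ico a b, f x ≠ 0)
    (hder : ∀ x ∈ Ico a b, deriv f x ≤ -m * f x ^ 2) :
    ∀ x ∈ Ico a b, (f a)⁻¹ + m * (x - a) ≤ (f x)⁻¹ := by
  have hg : ∀ x ∈ Ico a b,
      HasDerivAt (fun t ↦ (f t)⁻¹ - m * t) (-deriv f x / f x ^ 2 - m) x := fun x hx ↦
    ((hf x hx).hasDerivAt.inv (hf0 x hx)).sub (by simpa using (hasDerivAt_id x).const_mul m)
  have hmono : MonotoneOn (fun t ↦ (f t)⁻¹ - m * t) (Ico a b) := by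
    refine monotoneOn_of_hasDerivWithinAt_nonneg (convex_Ico a b)
      (fun x hx ↦ (hg x hx).continuousAt.continuousWithinAt)
      (fun x hx ↦ (hg x (interior_subset hx)).hasDerivWithinAt) fun x hx ↦ ?_
    replace hx := interior_subset hx
    rw [sub_nonneg, le_div_iff₀ (pow_two_pos_of_ne_zero (hf0 x hx))]
    linarith [hder x hx]
  intro x hx
  have := hmono ⟨le_rfl, hx.1.trans_lt hx.2⟩ hx hx.1
  simp only at this
  linarith

/-- Riccati-type blow-up lemma (Lemma 2.10): if `y` is differentiable on `[0,T)` and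
satisfies `y' ≤ -C y² + K` there, with `C, K > 0` and `y 0 < -√(K/C)`, then `y`
cannot persist past time `1/(-C y₀ + K/y₀)`; i.e. the solution goes to `-∞`
before `t` reaches `1/(-C y₀ + K/y₀)`. -/
theorem riccati_blowup (T C K : ℝ) (hC : 0 < C) (hK : 0 < K) (y : ℝ → ℝ)
    (hdiff : ∀ t ∈ Ico 0 T, DifferentiableAt ℝ y t)
    (hineq : ∀ t ∈ Ico 0 T, deriv y t ≤ -C * (y t) ^ 2 + K)
    (hy0 : y 0 < -Real.sqrt (K / C)) :
    T ≤ 1 / (-C * y 0 + K / y 0) := by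
  have hKy : K < C * y 0 ^ 2 := lt_mul_sq_of_lt_neg_sqrt hC hy0
  have hy0neg : y 0 < 0 := hy0.trans_le (neg_nonpos.2 (Real.sqrt_nonneg _))
  have hy0ne : y 0 ≠ 0 := hy0neg.ne
  have hbelow : ∀ t ∈ Ico 0 T, y t ≤ y 0 :=
    le_of_deriv_neg_on_level hdiff le_rfl fun t ht hyt ↦ by linarith [hyt ▸ hineq t ht]
  have hneg : ∀ t ∈ Ico 0 T, y t < 0 := fun t ht ↦ (hbelow t ht).trans_lt hy0neg
  set a := C - K / y 0 ^ 2
  have ha : 0 < a := sub_pos.2 ((div_lt_iff₀ (pow_two_pos_of_ne_zero hy0ne)).2 (by linarith))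
  have hrec := inv_add_mul_le_inv_of_deriv_le_neg_mul_sq hdiff (fun t ht ↦ (hneg t ht).ne)
    fun t ht ↦ (hineq t ht).trans (neg_mul_sq_add_le_of_le_of_neg hK.le (hbelow t ht) hy0neg)
  have hB : -C * y 0 + K / y 0 = a * -y 0 := by simp only [a]; field_simp; ring
  by_contra! hT
  have ht : 1 / (-C * y 0 + K / y 0) ∈ Ico 0 T :=
    ⟨by rw [hB]; exact (one_div_pos.2 (mul_pos ha (neg_pos.2 hy0neg))).le, hT⟩
  have hat : a * (1 / (-C * y 0 + K / y 0) - 0) = -(y 0)⁻¹ := by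
    rw [hB, sub_zero]; field_simp
  linarith [hrec _ ht, hat, inv_lt_zero.2 (hneg _ ht)]
end

section
/- Let m : [0,T) → ℝ be locally Lipschitz with m'(t) ≤ -(1/2) m(t)² + K almost everywhere, where K > 0. If m(0) < -√(2K), then m(t) → -∞ as t → T* for some T* ≤ 2 m(0) / (2K - m(0)²). -/
open Set MeasureTheory Filter
open scoped NNReal

/-!
While `m < -√(2K)` the right-hand side `-m²/2 + K` is negative, so `m` can never climb back to
that threshold and stays below `m 0` on `[0, T)`. There `m' ≤ -c m²` with
`c = 1/2 - K / m(0)² > 0`, so the positive function `-1/m` decreases at rate at least `c`,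
which bounds the length of the interval by `-1 / (c m(0)) = 2 m(0) / (2K - m(0)²)`.
Local Lipschitz continuity makes `m` absolutely continuous, which is what allows integrating
these a.e. derivative bounds.
-/

theorem ContinuousOn.forall_lt_of_forall_Ico_lt {α β : Type*}
    [ConditionallyCompleteLinearOrder α] [TopologicalSpace α] [OrderTopology α]
    [LinearOrder β] [TopologicalSpace β] [OrderClosedTopology β]
    {f : α → β} {a b : α} {M : β} (hf : ContinuousOn f (Icc a b))
    (h : ∀ u ∈ Icc a b, (∀ x ∈ Ico a u, f x < M) → f u < M) :
    ∀ u ∈ Icc a b, f u < M := by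
  by_contra! ⟨t, ht, hMt⟩
  have hbdd : BddBelow (Icc a b ∩ f ⁻¹' Ici M) := ⟨a, fun x hx => hx.1.1⟩
  have hfirst := (hf.preimage_isClosed_of_isClosed isClosed_Icc isClosed_Ici).csInf_mem
    ⟨t, ht, hMt⟩ hbdd
  refine (h _ hfirst.1 fun x hx => ?_).not_ge hfirst.2
  by_contra! hxM
  exact (csInf_le hbdd ⟨⟨hx.1, hx.2.le.trans hfirst.1.2⟩, hxM⟩).not_gt hx.2

theorem lipschitzOnWith_inv_of_le_nnnorm {𝕜 : Type*} [NormedDivisionRing 𝕜] {r : ℝ≥0}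
    (hr : 0 < r) :
    LipschitzOnWith (r ^ 2)⁻¹ (fun x : 𝕜 => x⁻¹) {x | r ≤ ‖x‖₊} := by
  refine LipschitzOnWith.of_dist_le_mul fun x hx y hy => ?_
  have hx0 : x ≠ 0 := nnnorm_pos.1 (hr.trans_le hx)
  have hy0 : y ≠ 0 := nnnorm_pos.1 (hr.trans_le hy)
  have hxr : (r : ℝ) ≤ ‖x‖ := hx
  have hyr : (r : ℝ) ≤ ‖y‖ := hy
  rw [dist_eq_norm, inv_sub_inv' hx0 hy0, norm_mul, norm_mul, norm_inv, norm_inv, norm_sub_rev,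
    ← dist_eq_norm, mul_right_comm]
  push_cast
  rw [sq, mul_inv]
  gcongr

theorem LipschitzOnWith.comp_absolutelyContinuousOnInterval {X Y : Type*}
    [PseudoMetricSpace X] [PseudoMetricSpace Y] {g : X → Y} {K : ℝ≥0} {s : Set X}
    {f : ℝ → X} {a b : ℝ} (hg : LipschitzOnWith K g s)
    (hf : AbsolutelyContinuousOnInterval f a b)
    (hfs : MapsTo f (uIcc a b) s) : AbsolutelyContinuousOnInterval (g ∘ f) a b := by
  unfold AbsolutelyContinuousOnInterval at hf ⊢
  refine squeeze_zero' (Eventually.of_forall fun _ => Finset.sum_nonneg fun _ _ => dist_nonneg)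
    ?_ (by simpa using hf.const_mul (K : ℝ))
  rw [eventually_inf_principal]
  filter_upwards with E hE
  rw [Finset.mul_sum]
  exact Finset.sum_le_sum fun i hi => hg.dist_le_mul _ (hfs (hE.1 i hi).1) _ (hfs (hE.1 i hi).2)

theorem AbsolutelyContinuousOnInterval.sub_le_mul_of_ae_deriv_le {f : ℝ → ℝ} {a b C : ℝ}
    (hf : AbsolutelyContinuousOnInterval f a b) (hab : a ≤ b)
    (hC : ∀ᵐ x, x ∈ Ioo a b → deriv f x ≤ C) : f b - f a ≤ C * (b - a) := by
  rw [← hf.integral_deriv_eq_sub]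
  calc ∫ x in a..b, deriv f x ≤ ∫ _ in a..b, C := by
        refine intervalIntegral.integral_mono_ae_restrict hab hf.intervalIntegrable_deriv
          intervalIntegrable_const ?_
        rw [Measure.restrict_congr_set Ioo_ae_eq_Icc.symm]
        exact (ae_restrict_iff' measurableSet_Ioo).2 hC
    _ = C * (b - a) := by simp [mul_comm]

theorem AbsolutelyContinuousOnInterval.forall_le_left_of_ae_deriv_nonpos_below {f : ℝ → ℝ}
    {a b M : ℝ} (hf : AbsolutelyContinuousOnInterval f a b) (hfa : f a < M)
    (hder : ∀ᵐ x, x ∈ Ioo a b → f x < M → deriv f x ≤ 0) :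
    ∀ u ∈ Icc a b, f u ≤ f a := by
  have hup_to : ∀ u ∈ Icc a b, (∀ x ∈ Ico a u, f x < M) → f u ≤ f a := by
    intro u hu hbelow
    have hsub : uIcc a u ⊆ uIcc a b := uIcc_subset_uIcc_left (Icc_subset_uIcc hu)
    have := (hf.mono hsub).sub_le_mul_of_ae_deriv_le hu.1 (C := 0) <| by
      filter_upwards [hder] with x hx hxu
      exact hx ⟨hxu.1, hxu.2.trans_le hu.2⟩ (hbelow x ⟨hxu.1.le, hxu.2⟩)
    linarith
  have hbelow : ∀ u ∈ Icc a b, f u < M :=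
    (hf.continuousOn.mono Icc_subset_uIcc).forall_lt_of_forall_Ico_lt fun u hu hbelow =>
      (hup_to u hu hbelow).trans_lt hfa
  exact fun u hu => hup_to u hu fun x hx => hbelow x ⟨hx.1, hx.2.le.trans hu.2⟩

theorem AbsolutelyContinuousOnInterval.mul_sub_lt_neg_inv_of_ae_deriv_le_neg_mul_sq
    {f : ℝ → ℝ} {a b c : ℝ} (hf : AbsolutelyContinuousOnInterval f a b) (hab : a ≤ b)
    (hfa : f a < 0)
    (hle : ∀ x ∈ Icc a b, f x ≤ f a)
    (hder : ∀ᵐ x, x ∈ Ioo a b → deriv f x ≤ -c * f x ^ 2) :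
    c * (b - a) < -(f a)⁻¹ := by
  have hneg : ∀ x ∈ Icc a b, f x < 0 := fun x hx => (hle x hx).trans_lt hfa
  have hg : AbsolutelyContinuousOnInterval (fun x => -(f x)⁻¹) a b := by
    have hinv := lipschitzOnWith_inv_of_le_nnnorm (𝕜 := ℝ) (nnnorm_pos.2 hfa.ne)
    refine (hinv.comp_absolutelyContinuousOnInterval hf ?_).fun_neg
    intro x hx
    rw [uIcc_of_le hab] at hx
    simp only [mem_ofPred_eq, ← NNReal.coe_le_coe, coe_nnnorm, Real.norm_eq_abs,
      abs_of_neg hfa, abs_of_neg (hneg x hx)]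
    linarith [hle x hx]
  have hg' : ∀ᵐ x, x ∈ Ioo a b → deriv (fun x => -(f x)⁻¹) x ≤ -c := by
    filter_upwards [hder, hf.ae_differentiableAt] with x hx hdiff hxab
    have hfx := hneg x (Ioo_subset_Icc_self hxab)
    have hfx' := (hdiff (Icc_subset_uIcc (Ioo_subset_Icc_self hxab))).hasDerivAt
    have hderiv := (hfx'.fun_inv hfx.ne).fun_neg
    rw [neg_div, neg_neg] at hderiv
    rw [hderiv.deriv, div_le_iff₀ (sq_pos_of_neg hfx)]
    linarith [hx hxab]
  have hgb : 0 < -(f b)⁻¹ := neg_pos.2 (inv_lt_zero.2 (hneg b ⟨hab, le_rfl⟩))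
  linarith [hg.sub_le_mul_of_ae_deriv_le hab hg']

theorem neg_half_mul_sq_add_le_neg_mul_sq {K x x₀ : ℝ} (hK : 0 ≤ K) (hx₀ : x₀ < 0)
    (hx : x ≤ x₀) : -(1 / 2) * x ^ 2 + K ≤ -(1 / 2 - K / x₀ ^ 2) * x ^ 2 := by
  have hsq : x₀ ^ 2 ≤ x ^ 2 := by nlinarith
  have : K ≤ K / x₀ ^ 2 * x ^ 2 := by
    rw [div_mul_eq_mul_div, le_div_iff₀ (sq_pos_of_neg hx₀)]
    nlinarith
  linarith

/-- Riccati blow-up for locally Lipschitz functions: if `m` is locally Lipschitz on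
`[0,T)` with `m' ≤ -½ m² + K` a.e. and `m 0 < -√(2K)` (`K > 0`), then `m` goes to `-∞`
at some time `T* ≤ 2 m(0)/(2K - m(0)²)`; in particular `T ≤ 2 m(0)/(2K - m(0)²)`. -/
theorem riccati_blowup_lipschitz (T K : ℝ) (hK : 0 < K) (m : ℝ → ℝ)
    (hlip : ∀ t ∈ Ico 0 T, ∃ L : NNReal, LipschitzOnWith L m (Icc 0 t))
    (hineq : ∀ᵐ t ∂(volume : Measure ℝ),
      t ∈ Ioo 0 T → deriv m t ≤ -(1/2) * (m t) ^ 2 + K)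
    (hm0 : m 0 < -Real.sqrt (2 * K)) :
    T ≤ 2 * m 0 / (2 * K - (m 0) ^ 2) := by
  set B := 2 * m 0 / (2 * K - m 0 ^ 2)
  have hsqrt : Real.sqrt (2 * K) ^ 2 = 2 * K := Real.sq_sqrt (by positivity)
  have hm0neg : m 0 < 0 := hm0.trans_le (neg_nonpos.2 (Real.sqrt_nonneg _))
  have hgap : 2 * K - m 0 ^ 2 < 0 := by nlinarith [Real.sqrt_nonneg (2 * K)]
  have hB : 0 ≤ B := (div_pos_of_neg_of_neg (by linarith) hgap).le
  by_contra! hBT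
  obtain ⟨L, hL⟩ := hlip B ⟨hB, hBT⟩
  have hm : AbsolutelyContinuousOnInterval m 0 B :=
    (uIcc_of_le hB ▸ hL).absolutelyContinuousOnInterval
  have hineqB : ∀ᵐ t, t ∈ Ioo 0 B → deriv m t ≤ -(1/2) * m t ^ 2 + K := by
    filter_upwards [hineq] with t ht htB using ht ⟨htB.1, htB.2.trans hBT⟩
  have hdecr : ∀ t ∈ Icc 0 B, m t ≤ m 0 :=
    hm.forall_le_left_of_ae_deriv_nonpos_below hm0 <| by
      filter_upwards [hineqB] with t ht htB hmt
      have : 2 * K < m t ^ 2 := by nlinarith [Real.sqrt_nonneg (2 * K)]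
      linarith [ht htB]
  have hblowup := hm.mul_sub_lt_neg_inv_of_ae_deriv_le_neg_mul_sq (c := 1 / 2 - K / m 0 ^ 2)
    hB hm0neg hdecr <| by
      filter_upwards [hineqB] with t ht htB
      exact (ht htB).trans <|
        neg_half_mul_sq_add_le_neg_mul_sq hK.le hm0neg (hdecr t (Ioo_subset_Icc_self htB))
  refine hblowup.ne ?_
  have hm0ne := hm0neg.ne
  have hgapne := hgap.ne
  simp only [B]
  field_simp
  ring
end

section
/- Let m : [0,T) → ℝ be locally Lipschitz satisfying -K ≤ m'(t) + (1/2) m(t)² ≤ K a.e. on (0,T) for some constant K > 0, and suppose liminf_{t→T} m(t) = -∞. Then lim_{t→T} (T - t) m(t) = -2. -/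
open Set MeasureTheory Filter

/-!
Once `m` drops below `-c` with `c² ≥ 2K`, the Riccati inequality gives `m' ≤ 0` there, so `m`
stays below `-c` up to `T`. On that final interval `1/m` is Lipschitz with
`(1/m)' = -m'/m² = 1/2 + O(K/c²)`, and since `liminf m = -∞` the value `0` is a limit point of
`1/m` at `T`; integrating from `s` towards `T` gives `-1/m(s) = (1/2 + O(K/c²)) (T - s)`.
Letting `c → ∞` yields `(T - s) m(s) → -2`.
-/

open scoped NNReal Topology

theorem LipschitzOnWith.inv₀_of_le_abs {α : Type*} [PseudoMetricSpace α] {f : α → ℝ}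
    {s : Set α} {L c : ℝ≥0} (hf : LipschitzOnWith L f s) (hc : 0 < c)
    (hfc : ∀ x ∈ s, (c : ℝ) ≤ |f x|) :
    LipschitzOnWith (L / c ^ 2) (fun x => (f x)⁻¹) s := by
  refine LipschitzOnWith.of_dist_le_mul fun x hx y hy => ?_
  have hcx := hfc x hx
  have hcy := hfc y hy
  have hc' : (0 : ℝ) < c := hc
  have hfxy : (c : ℝ) ^ 2 ≤ |f x * f y| := by
    rw [abs_mul, sq]; exact mul_le_mul hcx hcy hc'.le (abs_nonneg _)
  have hfx : f x ≠ 0 := abs_pos.1 (hc'.trans_le hcx)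
  have hfy : f y ≠ 0 := abs_pos.1 (hc'.trans_le hcy)
  calc dist (f x)⁻¹ (f y)⁻¹ = dist (f x) (f y) / |f x * f y| := by
        rw [Real.dist_eq, Real.dist_eq, inv_sub_inv hfx hfy, abs_div, abs_sub_comm, mul_comm]
    _ ≤ L * dist x y / c ^ 2 := by
        gcongr
        exact hf.dist_le_mul x hx y hy
    _ = ↑(L / c ^ 2) * dist x y := by push_cast; ring

namespace AbsolutelyContinuousOnInterval

variable {f : ℝ → ℝ} {a b C : ℝ}

theorem sub_le_mul_of_ae_deriv_le_s7 (hab : a ≤ b) (hf : AbsolutelyContinuousOnInterval f a b)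
    (h : ∀ᵐ x, x ∈ Ioo a b → deriv f x ≤ C) : f b - f a ≤ C * (b - a) := by
  rw [← hf.integral_deriv_eq_sub]
  calc ∫ x in a..b, deriv f x ≤ ∫ _ in a..b, C := by
        refine intervalIntegral.integral_mono_ae_restrict hab hf.intervalIntegrable_deriv
          intervalIntegrable_const ?_
        rw [EventuallyLE, Measure.restrict_congr_set Ioo_ae_eq_Icc.symm,
          ae_restrict_iff' measurableSet_Ioo]
        exact h
    _ = C * (b - a) := by simp [mul_comm]

theorem abs_sub_sub_mul_le {δ : ℝ} (hab : a ≤ b) (hf : AbsolutelyContinuousOnInterval f a b)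
    (h : ∀ᵐ x, x ∈ Ioo a b → |deriv f x - C| ≤ δ) :
    |f b - f a - C * (b - a)| ≤ δ * (b - a) := by
  have hupper := hf.sub_le_mul_of_ae_deriv_le_s7 hab (C := C + δ) <| h.mono fun x hx hmem => by
    linarith [(abs_le.1 (hx hmem)).2]
  have hlower := hf.neg.sub_le_mul_of_ae_deriv_le_s7 hab (C := -(C - δ)) <| h.mono fun x hx hmem => by
    rw [deriv.neg]; linarith [(abs_le.1 (hx hmem)).1]
  simp only [Pi.neg_apply] at hlower
  exact abs_le.2 ⟨by linarith, by linarith⟩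

theorem lt_of_ae_deriv_nonpos (hab : a ≤ b) (hf : AbsolutelyContinuousOnInterval f a b)
    (ha : f a < C) (h : ∀ᵐ x, x ∈ Ioo a b → f x < C → deriv f x ≤ 0) : f b < C := by
  by_contra! hb
  set S := Icc a b ∩ f ⁻¹' Ici C
  have hS : IsClosed S := (uIcc_of_le hab ▸ hf.continuousOn).preimage_isClosed_of_isClosed
    isClosed_Icc isClosed_Ici
  have hσ : sInf S ∈ S :=
    hS.csInf_mem ⟨b, right_mem_Icc.2 hab, hb⟩ (bddBelow_Icc.mono inter_subset_left)
  have haσ : a ≤ sInf S := hσ.1.1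
  have hbefore : ∀ x ∈ Ico a (sInf S), f x < C := fun x hx => by
    by_contra! hx'
    exact hx.2.not_ge (csInf_le (bddBelow_Icc.mono inter_subset_left)
      ⟨⟨hx.1, hx.2.le.trans hσ.1.2⟩, hx'⟩)
  have hdecr := (hf.mono (by simp [uIcc_of_le hab, uIcc_of_le haσ, Icc_subset_Icc_right hσ.1.2])
    ).sub_le_mul_of_ae_deriv_le_s7 haσ (C := 0) <| h.mono fun x hx hmem =>
      hx ⟨hmem.1, hmem.2.trans_le hσ.1.2⟩ (hbefore x ⟨hmem.1.le, hmem.2⟩)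
  have hCσ : C ≤ f (sInf S) := hσ.2
  linarith [zero_mul (sInf S - a)]

end AbsolutelyContinuousOnInterval

theorem Filter.frequently_lt_of_liminf_coe_eq_bot {α : Type*} {l : Filter α} {f : α → ℝ}
    (h : liminf (fun x => (f x : EReal)) l = ⊥) (M : ℝ) : ∃ᶠ x in l, f x < M :=
  (frequently_lt_of_liminf_lt (by isBoundedDefault) (h ▸ EReal.bot_lt_coe M)).mono
    fun _ hx => EReal.coe_lt_coe_iff.1 hx

theorem abs_le_of_frequently_abs_lt {α : Type*} {l : Filter α} {g : α → ℝ} {x δ : ℝ}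
    (hsmall : ∀ η > 0, ∃ᶠ t in l, |g t| < η) (hclose : ∀ᶠ t in l, |x - g t| ≤ δ) :
    |x| ≤ δ := by
  refine le_of_forall_pos_lt_add fun η hη => ?_
  obtain ⟨t, hgt, hxt⟩ := ((hsmall η hη).and_eventually hclose).exists
  linarith [abs_sub_abs_le_abs_sub x (g t)]

theorem abs_neg_div_sq_sub_half_le {d y K c : ℝ} (hc : 0 < c) (hy : c ≤ |y|)
    (hd : |d + 1 / 2 * y ^ 2| ≤ K) : |-d / y ^ 2 - 1 / 2| ≤ K / c ^ 2 := by
  have hy2 : c ^ 2 ≤ y ^ 2 := by simpa using pow_le_pow_left₀ hc.le hy 2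
  have hy0 : 0 < y ^ 2 := (pow_pos hc 2).trans_le hy2
  calc |-d / y ^ 2 - 1 / 2| = |-((d + 1 / 2 * y ^ 2) / y ^ 2)| := by
        rw [add_div, mul_div_assoc, div_self hy0.ne']; congr 1; ring
    _ = |d + 1 / 2 * y ^ 2| / y ^ 2 := by rw [abs_neg, abs_div, abs_of_pos hy0]
    _ ≤ K / c ^ 2 := div_le_div₀ ((abs_nonneg _).trans hd) hd (by positivity) hy2

section Riccati

variable {T K c t₀ : ℝ} {m : ℝ → ℝ}

theorem lt_neg_of_riccati_le (hc : 0 < c) (hcK : 2 * K ≤ c ^ 2)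
    (hlip : ∀ t ∈ Ico 0 T, ∃ L : NNReal, LipschitzOnWith L m (Icc 0 t))
    (hineq : ∀ᵐ t ∂(volume : Measure ℝ), t ∈ Ioo 0 T → deriv m t + 1 / 2 * m t ^ 2 ≤ K)
    (ht₀ : 0 ≤ t₀) (hm₀ : m t₀ < -c) : ∀ s ∈ Ico t₀ T, m s < -c := by
  intro s hs
  obtain ⟨L, hL⟩ := hlip s ⟨ht₀.trans hs.1, hs.2⟩
  have hLs : LipschitzOnWith L m (uIcc t₀ s) :=
    hL.mono (by rw [uIcc_of_le hs.1]; exact Icc_subset_Icc_left ht₀)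
  refine hLs.absolutelyContinuousOnInterval.lt_of_ae_deriv_nonpos hs.1 hm₀ ?_
  filter_upwards [hineq] with x hx hmem hmx
  have hx' := hx ⟨ht₀.trans_lt hmem.1, hmem.2.trans hs.2⟩
  nlinarith

theorem abs_inv_sub_inv_sub_half_le (hc : 0 < c)
    (hlip : ∀ t ∈ Ico 0 T, ∃ L : NNReal, LipschitzOnWith L m (Icc 0 t))
    (hineq : ∀ᵐ t ∂(volume : Measure ℝ), t ∈ Ioo 0 T → |deriv m t + 1 / 2 * m t ^ 2| ≤ K)
    (ht₀ : 0 ≤ t₀) (hneg : ∀ s ∈ Ico t₀ T, m s < -c) {s t : ℝ} (hs : t₀ ≤ s) (hst : s ≤ t)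
    (ht : t < T) : |(m t)⁻¹ - (m s)⁻¹ - 1 / 2 * (t - s)| ≤ K / c ^ 2 * (t - s) := by
  obtain ⟨L, hL⟩ := hlip t ⟨ht₀.trans (hs.trans hst), ht⟩
  have hLst : LipschitzOnWith L m (uIcc s t) :=
    hL.mono (by rw [uIcc_of_le hst]; exact Icc_subset_Icc_left (ht₀.trans hs))
  have hmc : ∀ x ∈ uIcc s t, c ≤ |m x| := fun x hx => by
    rw [uIcc_of_le hst] at hx
    have := hneg x ⟨hs.trans hx.1, hx.2.trans_lt ht⟩
    rw [abs_of_neg (by linarith)]; linarith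
  have hinv := hLst.inv₀_of_le_abs (c := c.toNNReal) (by simpa using hc)
    (by simpa [Real.coe_toNNReal _ hc.le] using hmc)
  refine hinv.absolutelyContinuousOnInterval.abs_sub_sub_mul_le hst ?_
  filter_upwards [hineq, hLst.absolutelyContinuousOnInterval.ae_differentiableAt]
    with x hx hdx hmem
  have hx' : x ∈ uIcc s t := by rw [uIcc_of_le hst]; exact Ioo_subset_Icc_self hmem
  have hmx : m x ≠ 0 := abs_pos.1 (hc.trans_le (hmc x hx'))
  rw [((hdx hx').hasDerivAt.fun_inv hmx).deriv]
  exact abs_neg_div_sq_sub_half_le hc (hmc x hx')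
    (hx ⟨ht₀.trans_lt (hs.trans_lt hmem.1), hmem.2.trans ht⟩)

theorem abs_neg_inv_div_sub_half_le (hc : 0 < c)
    (hlip : ∀ t ∈ Ico 0 T, ∃ L : NNReal, LipschitzOnWith L m (Icc 0 t))
    (hineq : ∀ᵐ t ∂(volume : Measure ℝ), t ∈ Ioo 0 T → |deriv m t + 1 / 2 * m t ^ 2| ≤ K)
    (ht₀ : 0 ≤ t₀) (hneg : ∀ s ∈ Ico t₀ T, m s < -c) (hfreq : ∀ M : ℝ, ∃ᶠ t in 𝓝[<] T, m t < M)
    {s : ℝ} (hs : s ∈ Ico t₀ T) : |-(m s)⁻¹ / (T - s) - 1 / 2| ≤ K / c ^ 2 := by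
  have hTs : 0 < T - s := sub_pos.2 hs.2
  have hsmall : ∀ η > 0, ∃ᶠ t in 𝓝[<] T, |-(m t)⁻¹ - 1 / 2 * (T - t)| < η := by
    intro η hη
    refine ((hfreq (-η⁻¹)).and_eventually (Ioo_mem_nhdsLT (sub_lt_self T hη))).mono ?_
    rintro t ⟨hmt, ht⟩
    have hpos : 0 < (-m t)⁻¹ := inv_pos.2 (by linarith [inv_pos.2 hη])
    have hinv : (-m t)⁻¹ < η := inv_lt_of_inv_lt₀ hη (by linarith)
    rw [inv_neg] at hpos hinv
    rw [abs_sub_lt_iff]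
    constructor <;> linarith [ht.1, ht.2]
  have hclose : ∀ᶠ t in 𝓝[<] T,
      |(-(m s)⁻¹ - 1 / 2 * (T - s)) - (-(m t)⁻¹ - 1 / 2 * (T - t))| ≤ K / c ^ 2 * (T - s) := by
    filter_upwards [Ioo_mem_nhdsLT hs.2] with t ht
    rw [show (-(m s)⁻¹ - 1 / 2 * (T - s)) - (-(m t)⁻¹ - 1 / 2 * (T - t))
      = (m t)⁻¹ - (m s)⁻¹ - 1 / 2 * (t - s) by ring]
    have h := abs_inv_sub_inv_sub_half_le hc hlip hineq ht₀ hneg hs.1 ht.1.le ht.2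
    have hK : 0 ≤ K / c ^ 2 := nonneg_of_mul_nonneg_left ((abs_nonneg _).trans h) (sub_pos.2 ht.1)
    exact h.trans (mul_le_mul_of_nonneg_left (by linarith [ht.2]) hK)
  rw [show -(m s)⁻¹ / (T - s) - 1 / 2 = (-(m s)⁻¹ - 1 / 2 * (T - s)) / (T - s) by
    field_simp, abs_div, abs_of_pos hTs, div_le_iff₀ hTs]
  exact abs_le_of_frequently_abs_lt hsmall hclose

end Riccati

theorem blowup_rate_general (T K : ℝ) (hT : 0 < T) (m : ℝ → ℝ)
    (hlip : ∀ t ∈ Ico 0 T, ∃ L : NNReal, LipschitzOnWith L m (Icc 0 t))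
    (hineq : ∀ᵐ t ∂(volume : Measure ℝ), t ∈ Ioo 0 T →
      -K ≤ deriv m t + (1/2) * (m t) ^ 2 ∧ deriv m t + (1/2) * (m t) ^ 2 ≤ K)
    (hliminf : liminf (fun t => (m t : EReal)) (nhdsWithin T (Iio T)) = ⊥) :
    Tendsto (fun t => (T - t) * m t) (nhdsWithin T (Iio T)) (nhds (-2)) := by
  have hfreq := frequently_lt_of_liminf_coe_eq_bot hliminf
  have habs : ∀ᵐ t ∂(volume : Measure ℝ), t ∈ Ioo 0 T → |deriv m t + 1 / 2 * m t ^ 2| ≤ K :=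
    hineq.mono fun t h ht => abs_le.2 (h ht)
  suffices h : Tendsto (fun s => -(m s)⁻¹ / (T - s)) (𝓝[<] T) (𝓝 (1 / 2)) by
    convert (h.inv₀ (by norm_num)).neg using 2 with s
    · rw [inv_div, div_neg, div_inv_eq_mul, neg_neg]
    · norm_num
  refine Metric.tendsto_nhds.2 fun ε hε => ?_
  have hsq := tendsto_pow_atTop (α := ℝ) two_ne_zero
  obtain ⟨c, hc, hcK, hKc⟩ : ∃ c : ℝ, 0 < c ∧ 2 * K ≤ c ^ 2 ∧ K / c ^ 2 < ε :=
    ((eventually_gt_atTop 0).and ((hsq.eventually_ge_atTop (2 * K)).and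
      ((tendsto_const_nhds.div_atTop hsq).eventually (gt_mem_nhds hε)))).exists
  obtain ⟨t₀, hm₀, ht₀⟩ := ((hfreq (-c)).and_eventually (Ioo_mem_nhdsLT hT)).exists
  have hneg := lt_neg_of_riccati_le hc hcK hlip (hineq.mono fun t h ht => (h ht).2) ht₀.1.le hm₀
  filter_upwards [Ioo_mem_nhdsLT ht₀.2] with s hs
  rw [Real.dist_eq]
  exact (abs_neg_inv_div_sub_half_le hc hlip habs ht₀.1.le hneg hfreq ⟨hs.1.le, hs.2⟩).trans_lt hKc

/-- Blow-up rate (Theorem 3.3, abstract form): if `m : [0,T) → ℝ` is locally Lipschitz,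
satisfies `-K ≤ m' + ½ m² ≤ K` a.e. on `(0,T)` with `K > 0`, and
`liminf_{t→T⁻} m(t) = -∞`, then `lim_{t→T⁻} (T - t) m(t) = -2`. -/
theorem blowup_rate (T K : ℝ) (hT : 0 < T) (hK : 0 < K) (m : ℝ → ℝ)
    (hlip : ∀ t ∈ Ico 0 T, ∃ L : NNReal, LipschitzOnWith L m (Icc 0 t))
    (hineq : ∀ᵐ t ∂(volume : Measure ℝ), t ∈ Ioo 0 T →
      -K ≤ deriv m t + (1/2) * (m t) ^ 2 ∧ deriv m t + (1/2) * (m t) ^ 2 ≤ K)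
    (hliminf : liminf (fun t => (m t : EReal)) (nhdsWithin T (Iio T)) = ⊥) :
    Tendsto (fun t => (T - t) * m t) (nhdsWithin T (Iio T)) (nhds (-2)) :=
  blowup_rate_general T K hT m hlip hineq hliminf
end

section
/- Let m, α : [0,T) → ℝ be C¹ functions satisfying m'(t) = -(1/2)m(t)² + (1/2)α(t)² + f(t) with |f(t)| ≤ c₁ for all t, and α'(t) = -m(t)α(t), with |α(0)| ≥ β > 0. Then the Lyapunov function w(t) = α(0)α(t) + (α(0)/α(t))(1 + m(t)²) satisfies w'(t) ≤ (c₁ + 1/2) w(t), and hence w(t) ≤ w(0) e^{(c₁+1/2)t} for all t ∈ [0,T). -/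
open Set

/-!
Since `α' = -mα`, the quotient `q = α(0)/α` satisfies `q' = m q`, and `q α² = α(0) α`; with
these the cubic terms of `w'` cancel and `w' = q m (1 + 2f)`. As `α` keeps its sign, `q > 0`
and `α(0) α > 0`, and `2|m| ≤ 1 + m²` gives `w' ≤ (c₁ + ½) q (1 + m²) ≤ (c₁ + ½) w`.
Grönwall's inequality then yields the exponential bound.
-/

theorem IsPreconnected.mul_pos_of_forall_ne_zero {s : Set ℝ} {g : ℝ → ℝ}
    (hs : IsPreconnected s) (hg : ContinuousOn g s) (hg0 : ∀ x ∈ s, g x ≠ 0) {x y : ℝ}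
    (hx : x ∈ s) (hy : y ∈ s) :
    0 < g x * g y := by
  by_contra! hxy
  have h0 : (0 : ℝ) ∈ uIcc (g x) (g y) := by
    rcases mul_nonpos_iff.1 hxy with ⟨hx0, hy0⟩ | ⟨hx0, hy0⟩
    · exact mem_uIcc.2 (Or.inr ⟨hy0, hx0⟩)
    · exact mem_uIcc.2 (Or.inl ⟨hx0, hy0⟩)
  obtain ⟨z, hz, hgz⟩ := isPreconnected_iff_ordConnected.1 (hs.image g hg)
    |>.uIcc_subset (mem_image_of_mem g hx) (mem_image_of_mem g hy) h0
  exact hg0 z hz hgz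

theorem le_mul_exp_of_hasDerivAt_le_mul {w w' : ℝ → ℝ} {K a b : ℝ}
    (hw : ∀ t ∈ Ico a b, HasDerivAt w (w' t) t) (bound : ∀ t ∈ Ico a b, w' t ≤ K * w t) :
    ∀ t ∈ Ico a b, w t ≤ w a * Real.exp (K * (t - a)) := by
  intro t ht
  have hsub : Icc a t ⊆ Ico a b := Icc_subset_Ico_right ht.2
  rw [← gronwallBound_ε0]
  refine le_gronwallBound_of_liminf_deriv_right_le
    (fun x hx => (hw x (hsub hx)).continuousAt.continuousWithinAt)
    (fun x hx _ hr =>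
      (hw x (hsub (Ico_subset_Icc_self hx))).hasDerivWithinAt.liminf_right_slope_le hr)
    le_rfl (fun x hx => ?_) t (right_mem_Icc.2 ht.1)
  simpa using bound x (hsub (Ico_subset_Icc_self hx))

theorem hasDerivAt_lyapunov {m α : ℝ → ℝ} {c f t : ℝ}
    (hm : HasDerivAt m (-(1/2) * (m t) ^ 2 + (1/2) * (α t) ^ 2 + f) t)
    (hα : HasDerivAt α (-(m t * α t)) t) (hαt : α t ≠ 0) :
    HasDerivAt (fun s => c * α s + (c / α s) * (1 + m s ^ 2))
      (c / α t * (m t * (1 + 2 * f))) t := by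
  refine ((hα.const_mul c).fun_add
    (((hasDerivAt_const t c).fun_div hα hαt).fun_mul ((hm.fun_pow 2).const_add 1))).congr_deriv ?_
  field_simp
  ring

theorem mul_one_add_two_mul_le {m f c : ℝ} (hf : |f| ≤ c) :
    m * (1 + 2 * f) ≤ (c + 1/2) * (1 + m ^ 2) := by
  obtain ⟨hcf, hfc⟩ := abs_le.1 hf
  nlinarith [mul_nonneg (neg_le_iff_add_nonneg'.1 hcf) (sq_nonneg (m - 1)),
    mul_nonneg (sub_nonneg.2 hfc) (sq_nonneg (m + 1)), sq_nonneg (m - 1)]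

theorem lyapunov_estimate_general (T c₁ : ℝ)
    (m α f : ℝ → ℝ)
    (hf : ∀ t ∈ Ico 0 T, |f t| ≤ c₁)
    (hm : ∀ t ∈ Ico 0 T,
      HasDerivAt m (-(1/2) * (m t) ^ 2 + (1/2) * (α t) ^ 2 + f t) t)
    (hα : ∀ t ∈ Ico 0 T, HasDerivAt α (-(m t * α t)) t)
    (hαne : ∀ t ∈ Ico 0 T, α t ≠ 0) :
    (∀ t ∈ Ico 0 T,
        deriv (fun s => α 0 * α s + (α 0 / α s) * (1 + m s ^ 2)) t ≤
          (c₁ + 1/2) * (α 0 * α t + (α 0 / α t) * (1 + m t ^ 2))) ∧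
      ∀ t ∈ Ico 0 T,
        α 0 * α t + (α 0 / α t) * (1 + m t ^ 2) ≤
          (α 0 * α 0 + (α 0 / α 0) * (1 + m 0 ^ 2)) *
            Real.exp ((c₁ + 1/2) * t) := by
  have hsign (t : ℝ) (ht : t ∈ Ico 0 T) : 0 < α 0 * α t :=
    isPreconnected_Ico.mul_pos_of_forall_ne_zero
      (fun s hs => (hα s hs).continuousAt.continuousWithinAt) hαne
      (left_mem_Ico.2 (ht.1.trans_lt ht.2)) ht
  have hderiv (t : ℝ) (ht : t ∈ Ico 0 T) :
      HasDerivAt (fun s => α 0 * α s + (α 0 / α s) * (1 + m s ^ 2))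
        (α 0 / α t * (m t * (1 + 2 * f t))) t :=
    hasDerivAt_lyapunov (hm t ht) (hα t ht) (hαne t ht)
  have hrate (t : ℝ) (ht : t ∈ Ico 0 T) :
      α 0 / α t * (m t * (1 + 2 * f t)) ≤
        (c₁ + 1/2) * (α 0 * α t + (α 0 / α t) * (1 + m t ^ 2)) := by
    have hq : 0 < α 0 / α t := div_pos_iff.2 (mul_pos_iff.1 (hsign t ht))
    have hK : 0 ≤ c₁ + 1/2 := by linarith [(abs_nonneg _).trans (hf t ht)]
    calc α 0 / α t * (m t * (1 + 2 * f t))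
        ≤ α 0 / α t * ((c₁ + 1/2) * (1 + m t ^ 2)) :=
          mul_le_mul_of_nonneg_left (mul_one_add_two_mul_le (hf t ht)) hq.le
      _ ≤ _ := by linarith [mul_nonneg hK (hsign t ht).le]
  refine ⟨fun t ht => (hderiv t ht).deriv ▸ hrate t ht, fun t ht => ?_⟩
  simpa using le_mul_exp_of_hasDerivAt_le_mul hderiv hrate t ht

/-- Lyapunov function estimate in the global existence proof (Theorem 4.1): if
`m' = -½m² + ½α² + f` with `|f| ≤ c₁`, `α' = -mα`, `α` never vanishes and
`|α 0| ≥ β > 0`, then `w(t) = α(0)α(t) + (α(0)/α(t))(1 + m(t)²)` satisfies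
`w' ≤ (c₁ + ½) w`, hence `w(t) ≤ w(0) e^{(c₁+½)t}` on `[0,T)`. -/
theorem lyapunov_estimate (T c₁ β : ℝ) (hT : 0 < T) (hc₁ : 0 < c₁) (hβ : 0 < β)
    (m α f : ℝ → ℝ)
    (hf : ∀ t ∈ Ico 0 T, |f t| ≤ c₁)
    (hm : ∀ t ∈ Ico 0 T,
      HasDerivAt m (-(1/2) * (m t) ^ 2 + (1/2) * (α t) ^ 2 + f t) t)
    (hα : ∀ t ∈ Ico 0 T, HasDerivAt α (-(m t * α t)) t)
    (hαne : ∀ t ∈ Ico 0 T, α t ≠ 0)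
    (hα0 : β ≤ |α 0|) :
    (∀ t ∈ Ico 0 T,
        deriv (fun s => α 0 * α s + (α 0 / α s) * (1 + m s ^ 2)) t ≤
          (c₁ + 1/2) * (α 0 * α t + (α 0 / α t) * (1 + m t ^ 2))) ∧
      ∀ t ∈ Ico 0 T,
        α 0 * α t + (α 0 / α t) * (1 + m t ^ 2) ≤
          (α 0 * α 0 + (α 0 / α 0) * (1 + m 0 ^ 2)) *
            Real.exp ((c₁ + 1/2) * t) :=
  lyapunov_estimate_general T c₁ m α f hf hm hα hαne
end

section
/- Let m : [t₀, T) → ℝ be locally Lipschitz and negative with m(t)² > K/ε for all t ∈ [t₀, T), where K > 0 and ε ∈ (0, 1/2), and suppose -K ≤ m'(t) + (1/2)m(t)² ≤ K a.e. Then 1/2 - ε ≤ -m'(t)/m(t)² ≤ 1/2 + ε a.e. on (t₀, T), and if moreover m(t) → -∞ as t → T, then integrating gives 1/(1/2 + ε) ≤ -m(t)(T - t) ≤ 1/(1/2 - ε) for all t ∈ (t₀, T). -/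
/-!
The Riccati bounds say that the derivative `-m'/m²` of `1/m` lies in `[1/2 - ε, 1/2 + ε]` a.e.
Since `m² > K/ε` keeps `m` away from zero, `1/m` is locally Lipschitz, hence absolutely
continuous, so these slope bounds integrate to bounds on `1/m(s) - 1/m(t)`. Letting `s → T`,
where `1/m(s) → 0`, gives `(1/2 - ε)(T - t) ≤ -1/m(t) ≤ (1/2 + ε)(T - t)`.
-/

open Set MeasureTheory Filter Topology NNReal

namespace AbsolutelyContinuousOnInterval

variable {f : ℝ → ℝ} {a b c : ℝ}

theorem mul_sub_le_sub_of_ae_le_deriv (hf : AbsolutelyContinuousOnInterval f a b) (hab : a ≤ b)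
    (h : ∀ᵐ x, x ∈ Ioo a b → c ≤ deriv f x) : c * (b - a) ≤ f b - f a := by
  have hint : IntegrableOn (deriv f) (Ioo a b) :=
    hf.intervalIntegrable_deriv.1.mono_set Ioo_subset_Ioc_self
  calc c * (b - a) = ∫ _ in Ioo a b, c := by simp [hab, mul_comm]
    _ ≤ ∫ x in Ioo a b, deriv f x :=
      setIntegral_mono_ae_restrict (integrableOn_const measure_Ioo_lt_top.ne) hint
        ((ae_restrict_iff' measurableSet_Ioo).2 h)
    _ = f b - f a := by
      rw [← hf.integral_deriv_eq_sub, intervalIntegral.integral_of_le hab,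
        integral_Ioc_eq_integral_Ioo]

theorem sub_le_mul_sub_of_ae_deriv_le (hf : AbsolutelyContinuousOnInterval f a b) (hab : a ≤ b)
    (h : ∀ᵐ x, x ∈ Ioo a b → deriv f x ≤ c) : f b - f a ≤ c * (b - a) := by
  have hint : IntegrableOn (deriv f) (Ioo a b) :=
    hf.intervalIntegrable_deriv.1.mono_set Ioo_subset_Ioc_self
  calc f b - f a = ∫ x in Ioo a b, deriv f x := by
        rw [← hf.integral_deriv_eq_sub, intervalIntegral.integral_of_le hab,
          integral_Ioc_eq_integral_Ioo]
    _ ≤ ∫ _ in Ioo a b, c :=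
      setIntegral_mono_ae_restrict hint (integrableOn_const measure_Ioo_lt_top.ne)
        ((ae_restrict_iff' measurableSet_Ioo).2 h)
    _ = c * (b - a) := by simp [hab, mul_comm]

end AbsolutelyContinuousOnInterval

theorem LipschitzOnWith.inv_of_le_abs {f : ℝ → ℝ} {s : Set ℝ} {K δ : ℝ≥0}
    (hf : LipschitzOnWith K f s) (hδ : 0 < δ) (h : ∀ x ∈ s, δ ≤ |f x|) :
    LipschitzOnWith (K / δ ^ 2) (fun x => (f x)⁻¹) s := by
  refine LipschitzOnWith.of_dist_le_mul fun x hx y hy => ?_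
  have hδx := h x hx
  have hδy := h y hy
  have hfx : f x ≠ 0 := abs_pos.1 ((NNReal.coe_pos.2 hδ).trans_le hδx)
  have hfy : f y ≠ 0 := abs_pos.1 ((NNReal.coe_pos.2 hδ).trans_le hδy)
  have hprod : (δ : ℝ) ^ 2 ≤ |f x * f y| := by
    rw [abs_mul, sq]; exact mul_le_mul hδx hδy δ.2 (abs_nonneg _)
  have hδ2 : (0 : ℝ) < δ ^ 2 := by positivity
  calc dist (f x)⁻¹ (f y)⁻¹ = dist (f x) (f y) / |f x * f y| := by
        rw [Real.dist_eq, Real.dist_eq, inv_sub_inv hfx hfy, abs_div, abs_sub_comm, mul_comm]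
    _ ≤ K * dist x y / δ ^ 2 :=
        div_le_div₀ (by positivity) (hf.dist_le_mul x hx y hy) hδ2 hprod
    _ = ↑(K / δ ^ 2) * dist x y := by push_cast; ring

theorem riccati_ratio_bounds {d x K ε : ℝ} (hε : 0 < ε) (hx : K / ε < x ^ 2)
    (hlo : -K ≤ d + 1 / 2 * x ^ 2) (hhi : d + 1 / 2 * x ^ 2 ≤ K) :
    1 / 2 - ε ≤ -d / x ^ 2 ∧ -d / x ^ 2 ≤ 1 / 2 + ε := by
  have hK : K < ε * x ^ 2 := by rwa [div_lt_iff₀' hε] at hx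
  have hx2 : 0 < x ^ 2 := by nlinarith
  constructor
  · rw [le_div_iff₀ hx2]; nlinarith
  · rw [div_le_iff₀ hx2]; nlinarith

theorem inv_sub_inv_bounds_of_riccati {m : ℝ → ℝ} {a b K ε : ℝ} {L : ℝ≥0} (hab : a ≤ b)
    (hK : 0 < K) (hε : 0 < ε) (hlip : LipschitzOnWith L m (Icc a b))
    (hsq : ∀ u ∈ Icc a b, K / ε < m u ^ 2)
    (hineq : ∀ᵐ u, u ∈ Ioo a b →
      -K ≤ deriv m u + 1 / 2 * m u ^ 2 ∧ deriv m u + 1 / 2 * m u ^ 2 ≤ K) :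
    (1 / 2 - ε) * (b - a) ≤ (m b)⁻¹ - (m a)⁻¹ ∧ (m b)⁻¹ - (m a)⁻¹ ≤ (1 / 2 + ε) * (b - a) := by
  rw [← uIcc_of_le hab] at hlip hsq
  let δ : ℝ≥0 := ⟨√(K / ε), Real.sqrt_nonneg _⟩
  have hδ : 0 < δ := NNReal.coe_pos.1 (Real.sqrt_pos.2 (div_pos hK hε))
  have hδle : ∀ u ∈ uIcc a b, δ ≤ |m u| := fun u hu =>
    (Real.sqrt_le_sqrt (hsq u hu).le).trans_eq (Real.sqrt_sq_eq_abs _)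
  have hac : AbsolutelyContinuousOnInterval (fun u => (m u)⁻¹) a b :=
    (hlip.inv_of_le_abs hδ hδle).absolutelyContinuousOnInterval
  have hderiv : ∀ᵐ u, u ∈ Ioo a b →
      1 / 2 - ε ≤ deriv (fun u => (m u)⁻¹) u ∧ deriv (fun u => (m u)⁻¹) u ≤ 1 / 2 + ε := by
    filter_upwards [hineq, hlip.absolutelyContinuousOnInterval.ae_differentiableAt]
      with u hineq_u hdiff hu
    have hu' : u ∈ uIcc a b := by rw [uIcc_of_le hab]; exact Ioo_subset_Icc_self hu
    have hmu : m u ≠ 0 := abs_pos.1 ((NNReal.coe_pos.2 hδ).trans_le (hδle u hu'))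
    rw [deriv_fun_inv'' (hdiff hu') hmu]
    exact riccati_ratio_bounds hε (hsq u hu') (hineq_u hu).1 (hineq_u hu).2
  exact ⟨hac.mul_sub_le_sub_of_ae_le_deriv hab (hderiv.mono fun u h hu => (h hu).1),
    hac.sub_le_mul_sub_of_ae_deriv_le hab (hderiv.mono fun u h hu => (h hu).2)⟩

theorem neg_mem_Icc_of_tendsto_zero_of_increment_bounds {g : ℝ → ℝ} {t T c₁ c₂ : ℝ}
    (ht : t < T) (hg : Tendsto g (𝓝[<] T) (𝓝 0))
    (hinc : ∀ s ∈ Ioo t T, c₁ * (s - t) ≤ g s - g t ∧ g s - g t ≤ c₂ * (s - t)) :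
    -g t ∈ Icc (c₁ * (T - t)) (c₂ * (T - t)) := by
  have hlim : Tendsto (fun s => g s - g t) (𝓝[<] T) (𝓝 (-g t)) := by
    simpa using hg.sub_const (g t)
  have hlin (c : ℝ) : Tendsto (fun s => c * (s - t)) (𝓝[<] T) (𝓝 (c * (T - t))) :=
    ((continuous_const.mul (continuous_id.sub continuous_const)).tendsto T).mono_left
      nhdsWithin_le_nhds
  have hev : ∀ᶠ s in 𝓝[<] T, s ∈ Ioo t T := Ioo_mem_nhdsLT ht
  exact ⟨le_of_tendsto_of_tendsto (hlin _) hlim (hev.mono fun s hs => (hinc s hs).1),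
    le_of_tendsto_of_tendsto hlim (hlin _) (hev.mono fun s hs => (hinc s hs).2)⟩

theorem one_div_le_mul_le_one_div_of_inv_mem_Icc {y τ a b : ℝ} (ha : 0 < a) (hb : 0 < b)
    (hτ : 0 < τ) (h : y⁻¹ ∈ Icc (a * τ) (b * τ)) : 1 / b ≤ y * τ ∧ y * τ ≤ 1 / a := by
  have hy : 0 < y := inv_pos.1 ((mul_pos ha hτ).trans_le h.1)
  have hinv : y * y⁻¹ = 1 := mul_inv_cancel₀ hy.ne'
  constructor
  · rw [div_le_iff₀ hb]
    nlinarith [mul_le_mul_of_nonneg_left h.2 hy.le]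
  · rw [le_div_iff₀ ha]
    nlinarith [mul_le_mul_of_nonneg_left h.1 hy.le]

theorem blowup_rate_key_step_general (t₀ T K ε : ℝ) (hK : 0 < K)
    (hε : ε ∈ Ioo (0:ℝ) (1/2)) (m : ℝ → ℝ)
    (hlip : ∀ t ∈ Ico t₀ T, ∃ L : NNReal, LipschitzOnWith L m (Icc t₀ t))
    (hsq : ∀ t ∈ Ico t₀ T, K / ε < (m t) ^ 2)
    (hineq : ∀ᵐ t ∂(volume : Measure ℝ), t ∈ Ioo t₀ T →
      -K ≤ deriv m t + (1/2) * (m t) ^ 2 ∧ deriv m t + (1/2) * (m t) ^ 2 ≤ K) :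
    (∀ᵐ t ∂(volume : Measure ℝ), t ∈ Ioo t₀ T →
        1/2 - ε ≤ -(deriv m t) / (m t) ^ 2 ∧ -(deriv m t) / (m t) ^ 2 ≤ 1/2 + ε) ∧
      (Tendsto m (nhdsWithin T (Iio T)) atBot →
        ∀ t ∈ Ioo t₀ T,
          1 / (1/2 + ε) ≤ -(m t) * (T - t) ∧ -(m t) * (T - t) ≤ 1 / (1/2 - ε)) := by
  obtain ⟨hε₀, hε₁⟩ := hε
  refine ⟨?_, fun hblow t ht => ?_⟩
  · filter_upwards [hineq] with u hu hmem
    exact riccati_ratio_bounds hε₀ (hsq u (Ioo_subset_Ico_self hmem)) (hu hmem).1 (hu hmem).2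
  have hinc : ∀ s ∈ Ioo t T, (1 / 2 - ε) * (s - t) ≤ (m s)⁻¹ - (m t)⁻¹ ∧
      (m s)⁻¹ - (m t)⁻¹ ≤ (1 / 2 + ε) * (s - t) := by
    intro s hs
    have hsub : Icc t s ⊆ Ico t₀ T := Icc_subset_Ico ht.1.le hs.2
    obtain ⟨L, hL⟩ := hlip s (hsub ⟨hs.1.le, le_rfl⟩)
    refine inv_sub_inv_bounds_of_riccati hs.1.le hK hε₀ (hL.mono (Icc_subset_Icc_left ht.1.le))
      (fun u hu => hsq u (hsub hu)) ?_
    filter_upwards [hineq] with u hu hmem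
    exact hu ⟨ht.1.trans hmem.1, hmem.2.trans hs.2⟩
  have hlim : -(m t)⁻¹ ∈ Icc ((1 / 2 - ε) * (T - t)) ((1 / 2 + ε) * (T - t)) :=
    neg_mem_Icc_of_tendsto_zero_of_increment_bounds ht.2 hblow.inv_tendsto_atBot hinc
  rw [← inv_neg] at hlim
  exact one_div_le_mul_le_one_div_of_inv_mem_Icc (by linarith) (by linarith)
    (sub_pos.2 ht.2) hlim

/-- Key step in the blow-up rate proof (Theorem 3.3): if `m` is locally Lipschitz and
negative on `[t₀,T)` with `m² > K/ε` there (`K > 0`, `0 < ε < 1/2`), and satisfies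
`-K ≤ m' + ½m² ≤ K` a.e., then `½ - ε ≤ -m'/m² ≤ ½ + ε` a.e. on `(t₀,T)`; and if
moreover `m(t) → -∞` as `t → T⁻`, then
`1/(½+ε) ≤ -m(t)(T-t) ≤ 1/(½-ε)` on `(t₀,T)`. -/
theorem blowup_rate_key_step (t₀ T K ε : ℝ) (ht₀ : 0 ≤ t₀) (hT : t₀ < T) (hK : 0 < K)
    (hε : ε ∈ Ioo (0:ℝ) (1/2)) (m : ℝ → ℝ)
    (hlip : ∀ t ∈ Ico t₀ T, ∃ L : NNReal, LipschitzOnWith L m (Icc t₀ t))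
    (hneg : ∀ t ∈ Ico t₀ T, m t < 0)
    (hsq : ∀ t ∈ Ico t₀ T, K / ε < (m t) ^ 2)
    (hineq : ∀ᵐ t ∂(volume : Measure ℝ), t ∈ Ioo t₀ T →
      -K ≤ deriv m t + (1/2) * (m t) ^ 2 ∧ deriv m t + (1/2) * (m t) ^ 2 ≤ K) :
    (∀ᵐ t ∂(volume : Measure ℝ), t ∈ Ioo t₀ T →
        1/2 - ε ≤ -(deriv m t) / (m t) ^ 2 ∧ -(deriv m t) / (m t) ^ 2 ≤ 1/2 + ε) ∧
      (Tendsto m (nhdsWithin T (Iio T)) atBot →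
        ∀ t ∈ Ioo t₀ T,
          1 / (1/2 + ε) ≤ -(m t) * (T - t) ∧ -(m t) * (T - t) ≤ 1 / (1/2 - ε)) :=
  blowup_rate_key_step_general t₀ T K ε hK hε m hlip hsq hineq
end
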